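/- Let A be a measurable space, μ a probability measure on A, ν a probability measure on A with ν ≪ μ, and Z : A → ℝ a bounded measurable function. Then KL( ν | π(Z) ) = KL( ν | μ ) - ∫_A Z dν + ln ∫_A e^{Z} dμ, as an identity in (-∞, +∞]; consequently KL( ν | π(Z) ) ≤ KL( ν | μ ) + 2·‖Z‖_∞. -/

import Mathlib

/-
The Gibbs measure `π(Z)` is Mathlib's exponentially tilted measure `μ.tilted Z`, and on the
support of `ν` the log-likelihood ratio transforms as
`ln dν/dπ(Z) = ln dν/dμ - Z + ln ∫ e^Z dμ`. Since `Z` is bounded, the correction term is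
`ν`-integrable, so both divergences are finite together and then differ by its integral.
That integral is at most `2‖Z‖_∞`, as `-∫ Z dν ≤ ‖Z‖_∞` and `∫ e^Z dμ ≤ e^{‖Z‖_∞}`.
-/

open MeasureTheory Classical

/-- The Gibbs measure associated with a measurable function `Z : A → ℝ` and reference
probability measure `μ`: the measure absolutely continuous with respect to `μ` with density
`a ↦ exp (Z a) / ∫ exp (Z a') μ(da')`. -/
noncomputable def gibbs {A : Type*} [MeasurableSpace A] (μ : Measure A) (Z : A → ℝ) :
    Measure A :=
  μ.withDensity fun a => ENNReal.ofReal (Real.exp (Z a) / ∫ a', Real.exp (Z a') ∂μ)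

/-- The Kullback–Leibler divergence `KL(ν|ρ) = ∫ ln (dν/dρ) dν` if `ν ≪ ρ` (and the integral
makes sense), and `+∞` otherwise, with values in the extended reals. -/
noncomputable def KL {A : Type*} [MeasurableSpace A] (ν ρ : Measure A) : EReal :=
  if ν ≪ ρ ∧ Integrable (fun a => Real.log (ν.rnDeriv ρ a).toReal) ν then
    ((∫ a, Real.log (ν.rnDeriv ρ a).toReal ∂ν : ℝ) : EReal)
  else ⊤

open Real

section KLDivergence

variable {A : Type*} [MeasurableSpace A] {μ ν ρ : Measure A} {f : A → ℝ}

theorem gibbs_eq_tilted (μ : Measure A) (Z : A → ℝ) : gibbs μ Z = μ.tilted Z := rfl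

theorem KL_eq_integral_llr (hνρ : ν ≪ ρ) (h : Integrable (llr ν ρ) ν) :
    KL ν ρ = ((∫ a, llr ν ρ a ∂ν : ℝ) : EReal) :=
  if_pos ⟨hνρ, h⟩

theorem KL_eq_top_of_not_integrable_llr (h : ¬Integrable (llr ν ρ) ν) : KL ν ρ = ⊤ :=
  if_neg fun h' => h h'.2

theorem integrable_llr_tilted_right_iff [IsFiniteMeasure ν] [SigmaFinite μ] (hνμ : ν ≪ μ)
    (hfν : Integrable f ν) (hfμ : Integrable (fun a => exp (f a)) μ) :
    Integrable (llr ν (μ.tilted f)) ν ↔ Integrable (llr ν μ) ν := by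
  refine ⟨fun h => ?_, fun h => integrable_llr_tilted_right hνμ hfν h hfμ⟩
  rw [integrable_congr (llr_tilted_right hνμ hfμ)] at h
  convert h.sub (hfν.neg.add (integrable_const (log (∫ a, exp (f a) ∂μ)))) using 1
  funext a
  simp

theorem KL_tilted_right [IsProbabilityMeasure ν] [SigmaFinite μ] (hνμ : ν ≪ μ)
    (hfν : Integrable f ν) (hfμ : Integrable (fun a => exp (f a)) μ) :
    KL ν (μ.tilted f) = KL ν μ + ((-∫ a, f a ∂ν + log (∫ a, exp (f a) ∂μ) : ℝ) : EReal) := by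
  have hiff := integrable_llr_tilted_right_iff hνμ hfν hfμ
  by_cases h : Integrable (llr ν μ) ν
  · rw [KL_eq_integral_llr (hνμ.trans (absolutelyContinuous_tilted hfμ)) (hiff.2 h),
      KL_eq_integral_llr hνμ h, integral_llr_tilted_right hνμ hfν hfμ h, ← EReal.coe_add]
    congr 1
    ring
  · rw [KL_eq_top_of_not_integrable_llr h, KL_eq_top_of_not_integrable_llr (mt hiff.1 h),
      EReal.top_add_coe]

end KLDivergence

section BoundedFunctions

variable {A : Type*} [MeasurableSpace A] {μ : Measure A} {f : A → ℝ} {C : ℝ}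

theorem integrable_exp_of_abs_le [IsFiniteMeasure μ] (hf : Measurable f) (hC : ∀ a, |f a| ≤ C) :
    Integrable (fun a => exp (f a)) μ :=
  Integrable.of_bound hf.exp.aestronglyMeasurable (exp C) <| ae_of_all _ fun a => by
    rw [norm_of_nonneg (exp_pos _).le]
    exact exp_le_exp.2 ((le_abs_self _).trans (hC a))

theorem neg_integral_le_of_abs_le [IsProbabilityMeasure μ] (hC : ∀ a, |f a| ≤ C) :
    -∫ a, f a ∂μ ≤ C := by
  have h := norm_integral_le_of_norm_le_const (μ := μ) (f := f) (ae_of_all _ hC)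
  rw [probReal_univ, mul_one] at h
  exact (neg_le_abs _).trans h

theorem log_integral_exp_le_of_le [IsProbabilityMeasure μ]
    (hfμ : Integrable (fun a => exp (f a)) μ) (hC : ∀ a, f a ≤ C) :
    log (∫ a, exp (f a) ∂μ) ≤ C := by
  rw [log_le_iff_le_exp (integral_exp_pos hfμ)]
  calc ∫ a, exp (f a) ∂μ ≤ ∫ _, exp C ∂μ :=
        integral_mono hfμ (integrable_const _) fun a => exp_le_exp.2 (hC a)
    _ = exp C := by simp

end BoundedFunctions

/-- change of reference measure in the KL divergence. For a probability
measure `μ`, a probability measure `ν ≪ μ` and a bounded measurable `Z : A → ℝ`,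
`KL(ν|π(Z)) = KL(ν|μ) - ∫ Z dν + ln ∫ e^Z dμ` as an identity in `(-∞,+∞]`; consequently
`KL(ν|π(Z)) ≤ KL(ν|μ) + 2‖Z‖_∞`. -/
theorem kl_change_of_reference_gibbs
    {A : Type*} [MeasurableSpace A] (μ : Measure A) [IsProbabilityMeasure μ]
    (ν : Measure A) [IsProbabilityMeasure ν] (hν : ν ≪ μ)
    (Z : A → ℝ) (hZmeas : Measurable Z) (hZb : ∃ C, ∀ a, |Z a| ≤ C) :
    KL ν (gibbs μ Z)
        = KL ν μ + ((-∫ a, Z a ∂ν + Real.log (∫ a, Real.exp (Z a) ∂μ) : ℝ) : EReal) ∧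
    KL ν (gibbs μ Z) ≤ KL ν μ + ((2 * ⨆ a, |Z a| : ℝ) : EReal) := by
  obtain ⟨C, hC⟩ := hZb
  have hZν : Integrable Z ν := Integrable.of_bound hZmeas.aestronglyMeasurable C (ae_of_all _ hC)
  have hexp : Integrable (fun a => exp (Z a)) μ := integrable_exp_of_abs_le hZmeas hC
  have hchange := KL_tilted_right hν hZν hexp
  rw [gibbs_eq_tilted]
  refine ⟨hchange, ?_⟩
  have hsup : ∀ a, |Z a| ≤ ⨆ a, |Z a| := le_ciSup ⟨C, Set.forall_mem_range.2 hC⟩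
  have hneg := neg_integral_le_of_abs_le (μ := ν) hsup
  have hlog := log_integral_exp_le_of_le hexp fun a => (le_abs_self _).trans (hsup a)
  rw [hchange]
  exact add_le_add_right (EReal.coe_le_coe_iff.2 (by linarith)) _
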